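/- arXiv:1904.07498 — 4 statements merged into one kernel-verified Lean document; each statement's English description precedes it below -/
import Mathlib

section
/- Let A ⊂ ℝ^d be a measurable set of finite measure such that the set of k-tuples (p_1,...,p_k) ∈ A^k with ‖p_i − p_j‖ > 2 for all i < j has λ_{kd}-measure zero. Then (1/2)·λ_{2d}({(p,q) ∈ A×A : ‖p−q‖ > 2}) ≤ (1/2)·(1 − 1/(k−1))·λ_d(A)^2. -/
/-!
Sample `N` independent points of `A`. Almost surely no `k` of them are pairwise more than `2`
apart, so by Turán's theorem at most `(1 - 1/(k-1)) N² / 2` of the pairs are; on the other hand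
the expected number of such pairs is `N (N - 1) / 2 · λ(E_A) / λ(A)²`. Comparing the two and
letting `N → ∞` gives the bound. Nothing here is specific to distances or to Lebesgue measure:
the argument works for any finite measure and any graph with measurable adjacency relation.
-/

open MeasureTheory ENNReal Filter Topology

theorem ENNReal.le_of_forall_mul_add_one_le {a b : ℝ≥0∞}
    (h : ∀ n : ℕ, a * (n + 1) ≤ b * (n + 2)) : a ≤ b := by
  rcases eq_or_ne b ⊤ with rfl | hb
  · exact le_top
  have hinv : Tendsto (fun n : ℕ => ((n : ℝ≥0∞) + 1)⁻¹) atTop (𝓝 0) := by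
    simpa [Function.comp_def] using
      ENNReal.tendsto_inv_nat_nhds_zero.comp (tendsto_add_atTop_nat 1)
  have hlim : Tendsto (fun n : ℕ => b + b / (n + 1)) atTop (𝓝 b) := by
    simpa [div_eq_mul_inv] using
      tendsto_const_nhds.add (ENNReal.Tendsto.const_mul hinv (Or.inr hb))
  refine ge_of_tendsto' hlim fun n => ?_
  have hn : (n : ℝ≥0∞) + 1 ≠ 0 := by positivity
  have hn' : (n : ℝ≥0∞) + 1 ≠ ⊤ := by finiteness
  calc a = a * (n + 1) / (n + 1) := (ENNReal.mul_div_cancel_right hn hn').symm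
    _ ≤ (b * (n + 1) + b) / (n + 1) := by
      gcongr
      calc a * (n + 1) ≤ b * (n + 2) := h n
        _ = b * (n + 1) + b := by ring
    _ = b + b / (n + 1) := by rw [ENNReal.add_div, ENNReal.mul_div_cancel_right hn hn']

theorem ENNReal.le_one_sub_inv_mul_of_mul_le {r : ℕ} (hr : 0 < r) {a b : ℝ≥0∞}
    (h : r * a ≤ (r - 1 : ℕ) * b) : a ≤ (1 - 1 / r) * b := by
  have hr0 : (r : ℝ≥0∞) ≠ 0 := by positivity
  have hfrac : 1 - 1 / (r : ℝ≥0∞) = (r - 1 : ℕ) / r := by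
    rw [ENNReal.natCast_sub, Nat.cast_one, ENNReal.sub_div fun _ _ => hr0,
      ENNReal.div_self hr0 (natCast_ne_top r)]
  rwa [hfrac, ← ENNReal.mul_div_right_comm,
    ENNReal.le_div_iff_mul_le (.inl hr0) (.inl (natCast_ne_top r)), mul_comm]

open Finset in
theorem Fintype.prod_comp_extend_const {ι κ α M : Type*} [Fintype ι] [Fintype κ] [CommMonoid M]
    (σ : ι ↪ κ) (g : α → M) (f : ι → α) (c : α) :
    ∏ j, g (Function.extend σ f (fun _ => c) j) = g c ^ (card κ - card ι) * ∏ i, g (f i) := by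
  classical
  rw [← prod_mul_prod_compl (univ.map σ), prod_map, mul_comm]
  congr 1
  · rw [Finset.prod_congr rfl fun j hj => ?_, prod_const, card_compl, card_map, card_univ]
    simp only [mem_compl, Finset.mem_map, mem_univ, true_and, not_exists] at hj
    rw [Function.extend_apply' _ _ _ fun ⟨i, hi⟩ => hj i hi]
  · simp [σ.injective.extend_apply]

theorem Set.preimage_comp_embedding_univ_pi {ι κ X : Type*} (σ : ι ↪ κ) (s : ι → Set X) :
    (fun x : κ → X => x ∘ σ) ⁻¹' Set.univ.pi s
      = Set.univ.pi (Function.extend σ s fun _ => Set.univ) := by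
  ext x
  simp only [Set.mem_preimage, Set.mem_univ_pi, Function.comp_apply]
  refine ⟨fun h j => ?_, fun h i => by simpa [σ.injective.extend_apply] using h (σ i)⟩
  by_cases hj : ∃ i, σ i = j
  · obtain ⟨i, rfl⟩ := hj
    simpa [σ.injective.extend_apply] using h i
  · simp [Function.extend_apply' _ _ _ hj]

namespace MeasureTheory.Measure

variable {X : Type*} [MeasurableSpace X] (μ : Measure X) [IsFiniteMeasure μ]
  {κ : Type*} [Fintype κ]

theorem pi_map_comp_embedding {ι : Type*} [Fintype ι] (σ : ι ↪ κ) :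
    (Measure.pi fun _ : κ => μ).map (fun x => x ∘ σ)
      = μ Set.univ ^ (Fintype.card κ - Fintype.card ι) • Measure.pi fun _ : ι => μ := by
  have box : ∀ s : ι → Set X, (∀ i, MeasurableSet (s i)) →
      (Measure.pi fun _ : κ => μ).map (fun x => x ∘ σ) (Set.univ.pi s)
        = (μ Set.univ ^ (Fintype.card κ - Fintype.card ι) • Measure.pi fun _ : ι => μ)
            (Set.univ.pi s) := fun s hs => by
    rw [map_apply (by fun_prop) (.univ_pi hs), Set.preimage_comp_embedding_univ_pi, pi_pi,
      Fintype.prod_comp_extend_const, smul_apply, pi_pi, smul_eq_mul]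
  refine ext_of_generate_finite _ generateFrom_pi.symm isPiSystem_pi ?_ ?_
  · rintro _ ⟨s, hs, rfl⟩
    exact box s fun i => hs i (Set.mem_univ i)
  · simpa using box _ fun _ => .univ

theorem pi_preimage_comp_embedding_null {ι : Type*} [Fintype ι] (σ : ι ↪ κ)
    {S : Set (ι → X)} (hS : Measure.pi (fun _ => μ) S = 0) :
    Measure.pi (fun _ : κ => μ) ((fun x => x ∘ σ) ⁻¹' S) = 0 := by
  refine QuasiMeasurePreserving.preimage_null ⟨by fun_prop, ?_⟩ hS
  rw [pi_map_comp_embedding]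
  exact smul_absolutelyContinuous

theorem pi_preimage_pair {i j : κ} (hij : i ≠ j) {S : Set (X × X)} (hS : MeasurableSet S) :
    Measure.pi (fun _ : κ => μ) {x | (x i, x j) ∈ S}
      = μ Set.univ ^ (Fintype.card κ - 2) * μ.prod μ S := by
  let σ : Fin 2 ↪ κ := ⟨![i, j], by
    intro a b; fin_cases a <;> fin_cases b <;> simp [hij, hij.symm]⟩
  have hpre : {x : κ → X | (x i, x j) ∈ S}
      = (fun x => x ∘ σ) ⁻¹' (MeasurableEquiv.piFinTwo fun _ => X) ⁻¹' S := rfl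
  rw [hpre, ← map_apply (by fun_prop) ((MeasurableEquiv.piFinTwo fun _ => X).measurable hS),
    pi_map_comp_embedding, smul_apply, smul_eq_mul, Fintype.card_fin,
    (measurePreserving_piFinTwo fun _ => μ).measure_preimage hS.nullMeasurableSet]

end MeasureTheory.Measure

namespace SimpleGraph

open Finset Fintype

theorem CliqueFree.two_mul_mul_card_edgeFinset_le {V : Type*} [Fintype V] {G : SimpleGraph V}
    [DecidableRel G.Adj] {r : ℕ} (hr : 0 < r) (h : G.CliqueFree (r + 1)) :
    2 * r * #G.edgeFinset ≤ (r - 1) * card V ^ 2 := by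
  classical
  obtain ⟨H, _, hH⟩ := exists_isTuranMaximal (V := V) hr
  calc 2 * r * #G.edgeFinset ≤ 2 * r * #H.edgeFinset := Nat.mul_le_mul_left _ (hH.2 h)
    _ = 2 * r * #(turanGraph (card V) r).edgeFinset := by
      rw [((isTuranMaximal_iff_nonempty_iso_turanGraph hr).mp hH).some.card_edgeFinset_eq]
    _ ≤ (r - 1) * card V ^ 2 := mul_card_edgeFinset_turanGraph_le

def largeDistGraph (X : Type*) [PseudoMetricSpace X] (δ : NNReal) : SimpleGraph X where
  Adj p q := δ < Dist.dist p q
  symm := ⟨fun p q (h : δ < Dist.dist p q) => show δ < Dist.dist q p by rwa [_root_.dist_comm]⟩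
  loopless := ⟨fun p (h : δ < Dist.dist p p) => by simp at h⟩

@[simp]
theorem largeDistGraph_adj {X : Type*} [PseudoMetricSpace X] {δ : NNReal} {p q : X} :
    (largeDistGraph X δ).Adj p q ↔ δ < Dist.dist p q :=
  Iff.rfl

theorem measurableSet_largeDistGraph_adj {X : Type*} [PseudoMetricSpace X] [MeasurableSpace X]
    [OpensMeasurableSpace X] [SecondCountableTopology X] (δ : NNReal) :
    MeasurableSet {p : X × X | (largeDistGraph X δ).Adj p.1 p.2} := by
  simpa using measurableSet_lt measurable_const measurable_dist

variable {X : Type*} [MeasurableSpace X] (G : SimpleGraph X) (μ : Measure X)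

open Function in
def EssentiallyCliqueFree (k : ℕ) : Prop :=
  Measure.pi (fun _ : Fin k => μ) {p | Pairwise (G.Adj on p)} = 0

variable {G μ} [IsFiniteMeasure μ] {κ : Type*} [Fintype κ]

theorem EssentiallyCliqueFree.ae_cliqueFree_comap {k : ℕ} (h : G.EssentiallyCliqueFree μ k) :
    ∀ᵐ x ∂(Measure.pi fun _ : κ => μ), (G.comap x).CliqueFree k := by
  refine measure_mono_null (fun x hx => ?_) (measure_iUnion_null fun σ : Fin k ↪ κ =>
    Measure.pi_preimage_comp_embedding_null μ σ h)
  obtain ⟨f⟩ := not_isEmpty_iff.1 (mt cliqueFree_iff.2 hx)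
  exact Set.mem_iUnion.2 ⟨⟨f, f.injective⟩, fun i j hij => f.toHom.map_adj hij⟩

open scoped Classical in
theorem lintegral_two_mul_card_edgeFinset_comap
    (hG : MeasurableSet {p : X × X | G.Adj p.1 p.2}) :
    ∫⁻ x, ((2 * #(G.comap x).edgeFinset : ℕ) : ℝ≥0∞) ∂(Measure.pi fun _ : κ => μ)
      = (card κ * (card κ - 1) : ℕ)
          * (μ Set.univ ^ (card κ - 2) * μ.prod μ {p | G.Adj p.1 p.2}) := by
  set T : κ × κ → Set (κ → X) := fun q => {x | (x q.1, x q.2) ∈ {p : X × X | G.Adj p.1 p.2}}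
  have hT : ∀ q, MeasurableSet (T q) := fun q =>
    (measurable_pi_apply q.1).prodMk (measurable_pi_apply q.2) hG
  have hcount : ∀ x : κ → X,
      ((2 * #(G.comap x).edgeFinset : ℕ) : ℝ≥0∞) = ∑ q, (T q).indicator 1 x := by
    intro x
    rw [two_mul_card_edgeFinset, card_filter]
    push_cast
    simp [T, Set.indicator_apply]
  simp_rw [hcount]
  rw [lintegral_finsetSum _ fun q _ => measurable_one.indicator (hT q)]
  simp_rw [lintegral_indicator_one (hT _)]
  rw [← sum_subset (subset_univ univ.offDiag) fun q _ hq => ?_]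
  · rw [Finset.sum_congr rfl fun q hq => Measure.pi_preimage_pair μ (mem_offDiag.1 hq).2.2 hG,
      sum_const, offDiag_card, card_univ, nsmul_eq_mul, Nat.mul_sub_one]
  · have : q.1 = q.2 := by simpa using hq
    simp [T, this]

theorem EssentiallyCliqueFree.mul_card_mul_le {r : ℕ} (hr : 0 < r)
    (hG : MeasurableSet {p : X × X | G.Adj p.1 p.2}) (h : G.EssentiallyCliqueFree μ (r + 1)) :
    r * (card κ * (card κ - 1) : ℕ)
        * (μ Set.univ ^ (card κ - 2) * μ.prod μ {p | G.Adj p.1 p.2})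
      ≤ ((r - 1) * card κ ^ 2 : ℕ) * μ Set.univ ^ card κ := by
  classical
  calc _ = ∫⁻ x, r * ((2 * #(G.comap x).edgeFinset : ℕ) : ℝ≥0∞)
          ∂(Measure.pi fun _ : κ => μ) := by
        rw [lintegral_const_mul' _ _ (by simp), lintegral_two_mul_card_edgeFinset_comap hG,
          mul_assoc]
    _ ≤ ∫⁻ _, ((r - 1) * card κ ^ 2 : ℕ) ∂(Measure.pi fun _ : κ => μ) := by
        refine lintegral_mono_ae (h.ae_cliqueFree_comap.mono fun x hx => ?_)
        rw [← Nat.cast_mul, Nat.cast_le, mul_left_comm, ← mul_assoc]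
        exact hx.two_mul_mul_card_edgeFinset_le hr
    _ = _ := by rw [lintegral_const, Measure.pi_univ, prod_const, card_univ]

theorem EssentiallyCliqueFree.mul_measure_adj_le {r : ℕ} (hr : 0 < r)
    (hG : MeasurableSet {p : X × X | G.Adj p.1 p.2}) (h : G.EssentiallyCliqueFree μ (r + 1)) :
    r * μ.prod μ {p | G.Adj p.1 p.2} ≤ (r - 1 : ℕ) * μ Set.univ ^ 2 := by
  set m := μ Set.univ
  set e := μ.prod μ {p | G.Adj p.1 p.2}
  have he : e ≤ m ^ 2 := (measure_mono (Set.subset_univ _)).trans_eq <| by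
    rw [← Set.univ_prod_univ, Measure.prod_prod, sq]
  rcases eq_or_ne m 0 with hm | hm
  · have he0 : e = 0 := by simpa [hm] using he
    simp [he0]
  refine ENNReal.le_of_forall_mul_add_one_le fun n => ?_
  -- Sample `n + 2` points and divide by `(n + 2) m ^ n`.
  have key := h.mul_card_mul_le hr hG (κ := Fin (n + 2))
  simp only [Fintype.card_fin, Nat.add_sub_cancel] at key
  have hc0 : (n + 2 : ℝ≥0∞) * m ^ n ≠ 0 := by positivity
  have hctop : (n + 2 : ℝ≥0∞) * m ^ n ≠ ⊤ := by finiteness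
  rw [← ENNReal.mul_le_mul_iff_left hc0 hctop]
  convert key using 1 <;> push_cast <;> ring

end SimpleGraph

theorem stmt1 (d k : ℕ) (hk : 2 ≤ k) (A : Set (EuclideanSpace ℝ (Fin d)))
    (hA : MeasurableSet A) (hfin : volume A < ⊤)
    (hfree : volume {p : Fin k → EuclideanSpace ℝ (Fin d) |
      (∀ i, p i ∈ A) ∧ ∀ i j, i < j → 2 < dist (p i) (p j)} = 0) :
    (1 / 2) * volume {p : EuclideanSpace ℝ (Fin d) × EuclideanSpace ℝ (Fin d) |
        p.1 ∈ A ∧ p.2 ∈ A ∧ 2 < dist p.1 p.2}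
      ≤ (1 / 2) * (1 - 1 / ((k : ℝ≥0∞) - 1)) * (volume A) ^ 2 := by
  obtain ⟨r, rfl⟩ : ∃ r, k = r + 1 := ⟨k - 1, by omega⟩
  have : IsFiniteMeasure (volume.restrict A) := isFiniteMeasure_restrict.2 hfin.ne
  set G := SimpleGraph.largeDistGraph (EuclideanSpace ℝ (Fin d)) 2
  have hG := SimpleGraph.measurableSet_largeDistGraph_adj (X := EuclideanSpace ℝ (Fin d)) 2
  have hGA : G.EssentiallyCliqueFree (volume.restrict A) (r + 1) := by
    rw [SimpleGraph.EssentiallyCliqueFree, ← Measure.restrict_pi_pi,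
      Measure.restrict_apply' (.univ_pi fun _ => hA), ← volume_pi, ← hfree]
    congr 1
    ext p
    rw [Set.mem_inter_iff, Set.mem_ofPred_eq, Set.mem_univ_pi, pairwise_iff_lt, and_comm]
    simp [G]
  have key := hGA.mul_measure_adj_le (by omega) hG
  rw [Measure.prod_restrict, Measure.restrict_apply hG, ← Measure.volume_eq_prod,
    Measure.restrict_apply_univ] at key
  rw [mul_assoc, Nat.cast_add_one, ENNReal.add_sub_cancel_right one_ne_top]
  gcongr
  refine ENNReal.le_one_sub_inv_mul_of_mul_le (by omega) (le_of_eq_of_le ?_ key)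
  congr 2
  ext p
  simp only [Set.mem_inter_iff, Set.mem_prod, Set.mem_ofPred_eq,
    SimpleGraph.largeDistGraph_adj, NNReal.coe_ofNat]
  tauto
end

section
/- Let D = {x ∈ ℝ² : 2 ≤ ‖x‖ ≤ R} for some R > 2 and let K ⊂ D be compact. Define the circular symmetrization K^st = {(r cos α, r sin α) : r ∈ [2,R], K ∩ S(0,r) ≠ ∅, |α| ≤ H¹(K ∩ S(0,r))/(2r)}, where S(0,r) is the circle of radius r and H¹ is 1-dimensional Hausdorff measure. Then K^st is compact. -/
/-!
The symmetrization is the image under the polar map `(r, α) ↦ (r cos α, r sin α)` of the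
parameter set `{(r, α) : r ∈ [2, R], K meets S_r, 2r|α| ≤ H¹(K ∩ S_r)}`, so it suffices that this
set is compact. It is bounded since `H¹(S_r) ≤ 2πr`, and closed since `r ↦ H¹(K ∩ S_r)` is upper
semicontinuous. For the latter, compactness of `K` puts `K ∩ S_s`, for `s` near `r`, close to
`K ∩ S_r`; the radial projection onto `S_r`, which scales `H¹` by `r/s`, maps it into a thin
neighbourhood of `K ∩ S_r` within `S_r`, and the `H¹`-measure of such neighbourhoods tends to
`H¹(K ∩ S_r)` because `H¹(S_r)` is finite.
-/

open MeasureTheory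

/-- Circular (Pólya) symmetrization of a subset of the annulus with inner radius 2
and outer radius `R`. -/
def circSym (R : ℝ) (K : Set (EuclideanSpace ℝ (Fin 2))) :
    Set (EuclideanSpace ℝ (Fin 2)) :=
  {p | ∃ r α : ℝ, r ∈ Set.Icc 2 R ∧ (K ∩ Metric.sphere 0 r).Nonempty ∧
    ENNReal.ofReal (2 * r * |α|) ≤
      (MeasureTheory.Measure.hausdorffMeasure 1 :
        Measure (EuclideanSpace ℝ (Fin 2))) (K ∩ Metric.sphere 0 r) ∧
    p 0 = r * Real.cos α ∧ p 1 = r * Real.sin α}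

open Metric Set Filter Topology Real
open scoped NNReal ENNReal Pointwise

theorem eventually_inter_sphere_subset_thickening {X : Type*} [PseudoMetricSpace X] {K : Set X}
    (hK : IsCompact K) (x : X) {δ : ℝ} (hδ : 0 < δ) (r : ℝ) :
    ∀ᶠ s in 𝓝 r, K ∩ sphere x s ⊆ thickening δ (K ∩ sphere x r) := by
  have hfar : IsCompact ((dist · x) '' (K \ thickening δ (K ∩ sphere x r))) :=
    (hK.diff isOpen_thickening).image (continuous_id.dist continuous_const)
  have hr : r ∉ (dist · x) '' (K \ thickening δ (K ∩ sphere x r)) := by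
    rintro ⟨y, ⟨hyK, hy⟩, rfl⟩
    exact hy (self_subset_thickening hδ _ ⟨hyK, mem_sphere.2 rfl⟩)
  filter_upwards [hfar.isClosed.isOpen_compl.mem_nhds hr] with s hs y hy
  by_contra hyδ
  exact hs ⟨y, ⟨hy.1, hyδ⟩, mem_sphere.1 hy.2⟩

section RadialProjection

variable {E : Type*} [NormedAddCommGroup E] [NormedSpace ℝ E]

theorem smul_mem_sphere_of_mem_sphere {x : E} {r s : ℝ} (hr : 0 ≤ r) (hs : 0 < s)
    (hx : x ∈ sphere (0 : E) s) : (r / s) • x ∈ sphere (0 : E) r := by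
  rw [mem_sphere_zero_iff_norm] at hx ⊢
  rw [norm_smul, hx, Real.norm_of_nonneg (by positivity), div_mul_cancel₀ _ hs.ne']

theorem dist_smul_self_of_mem_sphere {x : E} {r s : ℝ} (hs : 0 < s)
    (hx : x ∈ sphere (0 : E) s) : dist ((r / s) • x) x = |r - s| := by
  rw [mem_sphere_zero_iff_norm] at hx
  rw [dist_eq_norm]
  nth_rw 2 [← one_smul ℝ x]
  rw [← sub_smul, norm_smul, hx, Real.norm_eq_abs, div_sub_one hs.ne', abs_div, abs_of_pos hs,
    div_mul_cancel₀ _ hs.ne']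

theorem upperSemicontinuousAt_hausdorffMeasure_inter_sphere [MeasurableSpace E] [BorelSpace E]
    {K : Set E} (hK : IsCompact K) {d r : ℝ} (hd : 0 ≤ d) (hr : 0 < r) (hS : μH[d] (sphere (0 : E) r) ≠ ∞) :
    UpperSemicontinuousAt (fun s => μH[d] (K ∩ sphere 0 s)) r := by
  intro c hc
  set A := K ∩ sphere (0 : E) r
  obtain ⟨c', hAc', hc'c⟩ := exists_between hc
  have hthick : Tendsto (fun δ => μH[d].restrict (sphere 0 r) (thickening δ A)) (𝓝[>] 0)
      (𝓝 (μH[d] A)) := by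
    have := tendsto_measure_thickening_of_isClosed (μ := μH[d].restrict (sphere 0 r)) (s := A)
      ⟨1, one_pos, ((measure_mono (subset_univ _)).trans_lt
        (by rwa [Measure.restrict_apply_univ, lt_top_iff_ne_top])).ne⟩
      (hK.isClosed.inter isClosed_sphere)
    rwa [Measure.restrict_eq_self _ inter_subset_right] at this
  obtain ⟨δ, hδA, hδ⟩ := ((hthick.eventually_lt_const hAc').and self_mem_nhdsWithin).exists
  have hscale : Tendsto (fun s => ((‖s / r‖₊ ^ d : ℝ≥0) : ℝ≥0∞) * c') (𝓝 r) (𝓝 c') := by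
    have : Continuous fun s : ℝ => ((‖s / r‖₊ ^ d : ℝ≥0) : ℝ≥0∞) :=
      ENNReal.continuous_coe.comp
        ((NNReal.continuous_rpow_const hd).comp (continuous_id.div_const r).nnnorm)
    simpa [hr.ne'] using ENNReal.Tendsto.mul_const (this.tendsto r) (Or.inr hc'c.ne_top)
  filter_upwards [hscale.eventually_lt_const hc'c,
    eventually_inter_sphere_subset_thickening hK 0 (half_pos hδ) r,
    Metric.ball_mem_nhds r (half_pos hδ), lt_mem_nhds hr] with s hs_scale hs_sub hs_near hs_pos
  have hproj : (r / s) • (K ∩ sphere 0 s) ⊆ thickening δ A ∩ sphere 0 r := by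
    rintro _ ⟨x, hx, rfl⟩
    refine ⟨?_, smul_mem_sphere_of_mem_sphere hr.le hs_pos hx.2⟩
    obtain ⟨y, hyA, hxy⟩ := mem_thickening_iff.1 (hs_sub hx)
    refine mem_thickening_iff.2 ⟨y, hyA, ?_⟩
    calc dist ((r / s) • x) y ≤ dist ((r / s) • x) x + dist x y := dist_triangle _ _ _
      _ < δ / 2 + δ / 2 := by
        rw [dist_smul_self_of_mem_sphere hs_pos hx.2, abs_sub_comm]
        exact add_lt_add (mem_ball.1 hs_near) hxy
      _ = δ := add_halves δ
  calc μH[d] (K ∩ sphere 0 s) = ‖s / r‖₊ ^ d • μH[d] ((r / s) • (K ∩ sphere 0 s)) := by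
        rw [← Measure.hausdorffMeasure_smul₀ hd (div_ne_zero hs_pos.ne' hr.ne'), smul_smul,
          div_mul_div_cancel₀ hr.ne', div_self hs_pos.ne', one_smul]
    _ ≤ ‖s / r‖₊ ^ d • μH[d].restrict (sphere 0 r) (thickening δ A) := by
        rw [Measure.restrict_apply' isClosed_sphere.measurableSet]
        exact mul_le_mul_right (measure_mono hproj) _
    _ ≤ ‖s / r‖₊ ^ d • c' := by gcongr
    _ < c := hs_scale

end RadialProjection

local notation "ℝ²" => EuclideanSpace ℝ (Fin 2)

noncomputable def polarPt (r θ : ℝ) : ℝ² := !₂[r * Real.cos θ, r * Real.sin θ]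

theorem polarPt_eq_repr (r θ : ℝ) :
    polarPt r θ = Complex.orthonormalBasisOneI.repr (r * Complex.exp (θ * Complex.I)) := by
  ext i
  fin_cases i <;> simp [polarPt, Complex.exp_ofReal_mul_I_re, Complex.exp_ofReal_mul_I_im]

theorem continuous_polarPt : Continuous fun q : ℝ × ℝ => polarPt q.1 q.2 := by
  unfold polarPt
  fun_prop

theorem lipschitzWith_polarPt {r : ℝ} (hr : 0 ≤ r) : LipschitzWith r.toNNReal (polarPt r) := by
  refine LipschitzWith.of_dist_le_mul fun θ θ' => ?_
  have hexp : Complex.exp (θ * Complex.I) - Complex.exp (θ' * Complex.I) =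
      Complex.exp (θ' * Complex.I) * (Complex.exp (Complex.I * ↑(θ - θ')) - 1) := by
    rw [mul_sub, ← Complex.exp_add]; push_cast; ring_nf
  rw [polarPt_eq_repr, polarPt_eq_repr, LinearIsometryEquiv.dist_map, dist_eq_norm, ← mul_sub,
    hexp, norm_mul, norm_mul, Complex.norm_exp_ofReal_mul_I, one_mul, Complex.norm_real,
    Real.norm_of_nonneg hr, Real.coe_toNNReal _ hr, Real.dist_eq]
  exact mul_le_mul_of_nonneg_left Real.norm_exp_I_mul_ofReal_sub_one_le hr

theorem sphere_subset_image_polarPt (r : ℝ) : sphere (0 : ℝ²) r ⊆ polarPt r '' Icc (-π) π := by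
  intro p hp
  set z := Complex.orthonormalBasisOneI.repr.symm p
  have hz : ‖z‖ = r := by
    rw [LinearIsometryEquiv.norm_map]; exact mem_sphere_zero_iff_norm.1 hp
  refine ⟨z.arg, Ioc_subset_Icc_self (Complex.arg_mem_Ioc z), ?_⟩
  rw [polarPt_eq_repr, ← hz, Complex.norm_mul_exp_arg_mul_I, LinearIsometryEquiv.apply_symm_apply]

theorem hausdorffMeasure_sphere_le {r : ℝ} (hr : 0 ≤ r) :
    μH[1] (sphere (0 : ℝ²) r) ≤ ENNReal.ofReal (2 * π * r) :=
  calc μH[1] (sphere (0 : ℝ²) r) ≤ μH[1] (polarPt r '' Icc (-π) π) :=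
        measure_mono (sphere_subset_image_polarPt r)
    _ ≤ ENNReal.ofReal r ^ (1 : ℝ) * μH[1] (Icc (-π) π) :=
        (lipschitzWith_polarPt hr).hausdorffMeasure_image_le zero_le_one _
    _ = ENNReal.ofReal r * ENNReal.ofReal (π - -π) := by
        rw [hausdorffMeasure_real, Real.volume_Icc, ENNReal.rpow_one]
    _ = ENNReal.ofReal (2 * π * r) := by
        rw [← ENNReal.ofReal_mul hr]
        ring_nf

theorem upperSemicontinuousOn_hausdorffMeasure_inter_sphere {K : Set ℝ²} (hK : IsCompact K) :
    UpperSemicontinuousOn (fun r => μH[1] (K ∩ sphere (0 : ℝ²) r)) (Ioi 0) := fun _ hr =>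
  (upperSemicontinuousAt_hausdorffMeasure_inter_sphere hK zero_le_one hr
    (ne_top_of_le_ne_top ENNReal.ofReal_ne_top (hausdorffMeasure_sphere_le hr.le))
    ).upperSemicontinuousWithinAt _

def circSymParams (R : ℝ) (K : Set ℝ²) : Set (ℝ × ℝ) :=
  {q | q.1 ∈ Icc 2 R ∧ (K ∩ sphere 0 q.1).Nonempty ∧
    ENNReal.ofReal (2 * q.1 * |q.2|) ≤ μH[1] (K ∩ sphere 0 q.1)}

theorem circSym_eq_image (R : ℝ) (K : Set ℝ²) :
    circSym R K = (fun q => polarPt q.1 q.2) '' circSymParams R K := by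
  ext p
  constructor
  · rintro ⟨r, α, hr, hne, hα, h0, h1⟩
    refine ⟨(r, α), ⟨hr, hne, hα⟩, ?_⟩
    ext i
    fin_cases i <;> simp [polarPt, h0, h1]
  · rintro ⟨⟨r, α⟩, ⟨hr, hne, hα⟩, rfl⟩
    exact ⟨r, α, hr, hne, hα, by simp [polarPt], by simp [polarPt]⟩

theorem abs_le_pi_of_mem_circSymParams {R : ℝ} {K : Set ℝ²} {q : ℝ × ℝ}
    (hq : q ∈ circSymParams R K) : |q.2| ≤ π := by
  obtain ⟨hr, -, hα⟩ := hq
  have hr0 : 0 < q.1 := by linarith [hr.1]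
  have : 2 * q.1 * |q.2| ≤ 2 * π * q.1 := by
    refine (ENNReal.ofReal_le_ofReal_iff (by positivity)).1 ?_
    exact hα.trans ((measure_mono inter_subset_right).trans (hausdorffMeasure_sphere_le hr0.le))
  nlinarith

theorem isClosed_circSymParams (R : ℝ) {K : Set ℝ²} (hK : IsCompact K) :
    IsClosed (circSymParams R K) := by
  have hne : IsClosed {q : ℝ × ℝ | (K ∩ sphere 0 q.1).Nonempty} := by
    convert (hK.image continuous_norm).isClosed.preimage continuous_fst using 1
    ext q
    simp [Set.Nonempty]
  have hhypo : IsClosed {p : ℝ × ℝ≥0∞ | p.1 ∈ Icc 2 R ∧ p.2 ≤ μH[1] (K ∩ sphere 0 p.1)} :=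
    (upperSemicontinuousOn_iff_isClosed_hypograph isClosed_Icc).1
      ((upperSemicontinuousOn_hausdorffMeasure_inter_sphere hK).mono
        fun r hr => lt_of_lt_of_le two_pos hr.1)
  have hcont : Continuous fun q : ℝ × ℝ => (q.1, ENNReal.ofReal (2 * q.1 * |q.2|)) :=
    continuous_fst.prodMk (ENNReal.continuous_ofReal.comp (by fun_prop))
  have hparams : circSymParams R K =
      (fun q : ℝ × ℝ => (q.1, ENNReal.ofReal (2 * q.1 * |q.2|))) ⁻¹'
        {p : ℝ × ℝ≥0∞ | p.1 ∈ Icc 2 R ∧ p.2 ≤ μH[1] (K ∩ sphere 0 p.1)} ∩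
      {q : ℝ × ℝ | (K ∩ sphere 0 q.1).Nonempty} := by
    ext q
    simp only [circSymParams, mem_inter_iff, mem_preimage, mem_ofPred_eq]
    tauto
  rw [hparams]
  exact (hhypo.preimage hcont).inter hne

theorem isCompact_circSymParams (R : ℝ) {K : Set ℝ²} (hK : IsCompact K) :
    IsCompact (circSymParams R K) :=
  Metric.isCompact_of_isClosed_isBounded (isClosed_circSymParams R hK)
    ((isBounded_Icc 2 R).prod (isBounded_Icc (-π) π) |>.subset fun _ hq =>
      ⟨hq.1, abs_le.1 (abs_le_pi_of_mem_circSymParams hq)⟩)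

theorem stmt9_general (R : ℝ)
    (K : Set (EuclideanSpace ℝ (Fin 2))) (hK : IsCompact K) :
    IsCompact (circSym R K) := by
  rw [circSym_eq_image]
  exact (isCompact_circSymParams R hK).image continuous_polarPt

theorem stmt9 (R : ℝ) (hR : 2 < R)
    (K : Set (EuclideanSpace ℝ (Fin 2))) (hK : IsCompact K)
    (hKD : K ⊆ {x : EuclideanSpace ℝ (Fin 2) | 2 ≤ ‖x‖ ∧ ‖x‖ ≤ R}) :
    IsCompact (circSym R K) :=
  stmt9_general R K hK
end

section
/- Let W : X × X → [0,1] be a symmetric measurable function on a probability space X with ∫∫ ∏_{1≤i<j≤k} W(x_i, x_j) dx_1...dx_k = 0. Then ∫∫ W(x,y) dx dy ≤ 1 − 1/(k−1). -/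
/-!
Sample `n` points `x₁, …, xₙ` independently from `X`. Since `t(K_k, W) = 0`, almost surely every
`k` of them contain a pair with `W(xᵢ, xⱼ) = 0`, so the support of the weighted graph
`W(xᵢ, xⱼ)` is `K_k`-free and Turán's theorem bounds its total weight by `(1 - 1/(k-1)) n²`.
Taking expectations gives `n (n - 1) ∫∫ W ≤ (1 - 1/(k-1)) n²`, and `n → ∞` gives the claim.
-/

open Finset Function MeasureTheory

/-- The integrand of the homomorphism density `t(K_k, A)`. -/
def cliqueProd {V R : Type*} [CommMonoid R] (A : V → V → R) (k : ℕ) (x : Fin k → V) : R :=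
  ∏ e ∈ univ.filter (fun e : Fin k × Fin k => e.1 < e.2), A (x e.1) (x e.2)

section
variable {V R : Type*} [CommMonoidWithZero R] [Preorder R] [ZeroLEOneClass R] [PosMulMono R]
  {A : V → V → R} (h0 : ∀ i j, 0 ≤ A i j)
include h0

theorem cliqueProd_nonneg (k : ℕ) (x : Fin k → V) : 0 ≤ cliqueProd A k x :=
  prod_nonneg fun _ _ => h0 _ _

theorem cliqueProd_le_one (h1 : ∀ i j, A i j ≤ 1) (k : ℕ) (x : Fin k → V) :
    cliqueProd A k x ≤ 1 :=
  prod_le_one (fun _ _ => h0 _ _) fun _ _ => h1 _ _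
end

def supportGraph {V R : Type*} [Zero R] (A : V → V → R) : SimpleGraph V :=
  SimpleGraph.fromRel fun i j => A i j ≠ 0

theorem SimpleGraph.CliqueFree.two_mul_card_edgeFinset_le {V : Type*} [Fintype V]
    {G : SimpleGraph V} [DecidableRel G.Adj] {r : ℕ} (hG : G.CliqueFree (r + 1)) :
    2 * r * #G.edgeFinset ≤ (r - 1) * Fintype.card V ^ 2 := by
  rcases r.eq_zero_or_pos with rfl | hr
  · simp
  obtain ⟨H, _, hH⟩ := exists_isTuranMaximal (V := V) hr
  obtain ⟨e⟩ := (isTuranMaximal_iff_nonempty_iso_turanGraph hr).1 hH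
  calc 2 * r * #G.edgeFinset ≤ 2 * r * #H.edgeFinset := Nat.mul_le_mul_left _ (hH.2 hG)
    _ = 2 * r * #(turanGraph (Fintype.card V) r).edgeFinset := by rw [e.card_edgeFinset_eq]
    _ ≤ _ := mul_card_edgeFinset_turanGraph_le

section
variable {V : Type*}

theorem cliqueFree_supportGraph {R : Type*} [CommMonoidWithZero R] [NoZeroDivisors R]
    [Nontrivial R] {A : V → V → R} (hA : ∀ i j, A i j = A j i) {k : ℕ}
    (h : ∀ σ : Fin k → V, Injective σ → cliqueProd A k σ = 0) :
    (supportGraph A).CliqueFree k := by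
  by_contra hclique
  let f := SimpleGraph.topEmbeddingOfNotCliqueFree hclique
  refine prod_ne_zero_iff.2 (fun e he => ?_) (h f f.injective)
  have hadj : (supportGraph A).Adj (f e.1) (f e.2) :=
    f.map_adj_iff.2 (mem_filter.1 he).2.ne
  rcases ((SimpleGraph.fromRel_adj _ _ _).1 hadj).2 with h' | h'
  · exact h'
  · rwa [hA]

variable [Fintype V] [DecidableEq V]

theorem sum_erase_le_degree_supportGraph {A : V → V → ℝ} [DecidableRel (supportGraph A).Adj]
    (i : V) (h1 : ∀ j, A i j ≤ 1) :
    ∑ j ∈ univ.erase i, A i j ≤ (supportGraph A).degree i := by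
  have hsub : (supportGraph A).neighborFinset i ⊆ univ.erase i := fun j hj =>
    mem_erase.2 ⟨((supportGraph A).mem_neighborFinset i j |>.1 hj).ne', mem_univ j⟩
  have hzero : ∀ j ∈ univ.erase i, j ∉ (supportGraph A).neighborFinset i → A i j = 0 := by
    intro j hj hnj
    by_contra hij
    exact hnj <| ((supportGraph A).mem_neighborFinset i j).2 <|
      (SimpleGraph.fromRel_adj _ _ _).2 ⟨(ne_of_mem_erase hj).symm, .inl hij⟩
  calc ∑ j ∈ univ.erase i, A i j = ∑ j ∈ (supportGraph A).neighborFinset i, A i j :=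
        (sum_subset hsub hzero).symm
    _ ≤ ∑ j ∈ (supportGraph A).neighborFinset i, 1 := sum_le_sum fun j _ => h1 j
    _ = (supportGraph A).degree i := by simp [SimpleGraph.card_neighborFinset_eq_degree]

theorem mul_sum_sum_erase_le_of_cliqueFree {A : V → V → ℝ} (h1 : ∀ i j, A i j ≤ 1) {r : ℕ}
    (hA : (supportGraph A).CliqueFree (r + 1)) :
    r * ∑ i, ∑ j ∈ univ.erase i, A i j ≤ (r - 1) * Fintype.card V ^ 2 := by
  classical
  rcases r.eq_zero_or_pos with rfl | hr
  · have : IsEmpty V := SimpleGraph.cliqueFree_one.1 hA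
    simp
  have hE : r * ∑ i, (supportGraph A).degree i ≤ (r - 1) * Fintype.card V ^ 2 := by
    rw [SimpleGraph.sum_degrees_eq_twice_card_edges, mul_left_comm, ← mul_assoc]
    exact hA.two_mul_card_edgeFinset_le
  calc (r : ℝ) * ∑ i, ∑ j ∈ univ.erase i, A i j ≤ r * ∑ i, ((supportGraph A).degree i : ℝ) := by
        gcongr with i
        exact sum_erase_le_degree_supportGraph i (h1 i)
    _ = ((r * ∑ i, (supportGraph A).degree i : ℕ) : ℝ) := by push_cast; ring
    _ ≤ (((r - 1) * Fintype.card V ^ 2 : ℕ) : ℝ) := by exact_mod_cast hE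
    _ = (r - 1) * Fintype.card V ^ 2 := by push_cast [Nat.cast_sub hr]; ring
end

section
variable {X : Type*} [MeasurableSpace X] (μ : Measure X) [IsProbabilityMeasure μ]

theorem measurePreserving_comp_infinitePi {ι κ : Type*} {σ : κ → ι} (hσ : Injective σ) :
    MeasurePreserving (fun x : ι → X => x ∘ σ)
      (Measure.infinitePi fun _ => μ) (Measure.infinitePi fun _ => μ) := by
  let e : Set.range σ ≃ κ := (Equiv.ofInjective σ hσ).symm
  have hcomp : (fun x : ι → X => x ∘ σ) =
      MeasurableEquiv.piCongrLeft (fun _ => X) e ∘ (Set.range σ).domRestrict := by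
    ext x a
    simp [e, MeasurableEquiv.coe_piCongrLeft, Equiv.piCongrLeft_apply_eq_cast]
  rw [hcomp]
  refine MeasurePreserving.comp ?_ ⟨by fun_prop, Measure.infinitePi_map_restrict' _⟩
  exact ⟨MeasurableEquiv.measurable _, Measure.infinitePi_map_piCongrLeft (fun _ : κ => μ) e⟩

theorem measurePreserving_comp_pi {ι κ : Type*} [Fintype ι] [Fintype κ] {σ : κ → ι}
    (hσ : Injective σ) :
    MeasurePreserving (fun x : ι → X => x ∘ σ)
      (Measure.pi fun _ => μ) (Measure.pi fun _ => μ) := by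
  simpa only [Measure.infinitePi_eq_pi] using measurePreserving_comp_infinitePi μ hσ

theorem ae_forall_comp_of_injective {ι κ : Type*} [Fintype ι] [Fintype κ] {p : (κ → X) → Prop}
    (hp : ∀ᵐ y ∂(Measure.pi fun _ => μ), p y) :
    ∀ᵐ x ∂(Measure.pi fun _ : ι => μ), ∀ σ : κ → ι, Injective σ → p (x ∘ σ) := by
  refine ae_all_iff.2 fun σ => ?_
  by_cases hσ : Injective σ
  · filter_upwards [(measurePreserving_comp_pi μ hσ).quasiMeasurePreserving.ae hp] with x hx
    exact fun _ => hx
  · exact .of_forall fun x h => absurd h hσ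

theorem measurePreserving_pi_apply_pair {ι : Type*} [Fintype ι] {i j : ι} (hij : i ≠ j) :
    MeasurePreserving (fun x : ι → X => (x i, x j)) (Measure.pi fun _ => μ) (μ.prod μ) := by
  have hinj : Injective ![i, j] := by
    intro a b hab
    fin_cases a <;> fin_cases b <;> simp_all [hij.symm]
  exact (measurePreserving_finTwoArrow μ).comp (measurePreserving_comp_pi μ hinj)

variable {W : X → X → ℝ}

theorem integrable_cliqueProd (hW : Measurable (uncurry W)) (h0 : ∀ x y, 0 ≤ W x y)
    (h1 : ∀ x y, W x y ≤ 1) (k : ℕ) :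
    Integrable (cliqueProd W k) (Measure.pi fun _ => μ) := by
  refine .of_bound (Finset.measurable_prod _ fun e _ => ?_).aestronglyMeasurable 1
    (.of_forall fun y => ?_)
  · change Measurable (uncurry W ∘ fun y : Fin k → X => (y e.1, y e.2))
    fun_prop
  · rw [Real.norm_of_nonneg (cliqueProd_nonneg h0 k y)]
    exact cliqueProd_le_one h0 h1 k y

variable (hW : Integrable (uncurry W) (μ.prod μ))
include hW

theorem integral_pi_apply_pair {ι : Type*} [Fintype ι] {i j : ι} (hij : i ≠ j) :
    ∫ x, W (x i) (x j) ∂(Measure.pi fun _ => μ) = ∫ x, ∫ y, W x y ∂μ ∂μ := by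
  have hmp := measurePreserving_pi_apply_pair μ hij
  calc ∫ x, W (x i) (x j) ∂(Measure.pi fun _ => μ) = ∫ p, uncurry W p ∂(μ.prod μ) := by
        rw [← hmp.map_eq, integral_map hmp.measurable.aemeasurable (hmp.map_eq ▸ hW.1)]
        rfl
    _ = ∫ x, ∫ y, W x y ∂μ ∂μ := integral_prod _ hW

theorem integrable_pi_apply_pair {ι : Type*} [Fintype ι] {i j : ι} (hij : i ≠ j) :
    Integrable (fun x => W (x i) (x j)) (Measure.pi fun _ => μ) :=
  (measurePreserving_pi_apply_pair μ hij).integrable_comp_of_integrable hW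

theorem integrable_sum_sum_erase {ι : Type*} [Fintype ι] [DecidableEq ι] :
    Integrable (fun x : ι → X => ∑ i, ∑ j ∈ univ.erase i, W (x i) (x j))
      (Measure.pi fun _ => μ) :=
  integrable_finsetSum _ fun _ _ => integrable_finsetSum _ fun _ hj =>
    integrable_pi_apply_pair μ hW (ne_of_mem_erase hj).symm

theorem integral_sum_sum_erase {ι : Type*} [Fintype ι] [DecidableEq ι] :
    ∫ x : ι → X, ∑ i, ∑ j ∈ univ.erase i, W (x i) (x j) ∂(Measure.pi fun _ => μ) =
      (Fintype.card ι * (Fintype.card ι - 1) : ℕ) * ∫ x, ∫ y, W x y ∂μ ∂μ := by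
  have hint : ∀ i : ι, ∀ j ∈ univ.erase i,
      Integrable (fun x => W (x i) (x j)) (Measure.pi fun _ => μ) :=
    fun i j hj => integrable_pi_apply_pair μ hW (ne_of_mem_erase hj).symm
  rw [integral_finsetSum _ fun i _ => integrable_finsetSum _ (hint i)]
  rw [sum_congr rfl fun i _ => (integral_finsetSum _ (hint i)).trans <|
    sum_congr rfl fun j hj => integral_pi_apply_pair μ hW (ne_of_mem_erase hj).symm]
  simp only [sum_const, mem_univ, card_erase_of_mem, card_univ, nsmul_eq_mul, Nat.cast_mul]
  ring

theorem mul_integral_integral_le_of_ae_cliqueProd_eq_zero {ι : Type*} [Fintype ι]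
    (hsymm : ∀ x y, W x y = W y x) (h1 : ∀ x y, W x y ≤ 1) {r : ℕ}
    (hfree : ∀ᵐ y ∂(Measure.pi fun _ => μ), cliqueProd W (r + 1) y = 0) :
    r * ((Fintype.card ι * (Fintype.card ι - 1) : ℕ) * ∫ x, ∫ y, W x y ∂μ ∂μ) ≤
      (r - 1) * Fintype.card ι ^ 2 := by
  classical
  have hpt : ∀ᵐ x ∂(Measure.pi fun _ : ι => μ),
      r * ∑ i, ∑ j ∈ univ.erase i, W (x i) (x j) ≤ (r - 1) * Fintype.card ι ^ 2 := by
    filter_upwards [ae_forall_comp_of_injective μ hfree] with x hx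
    exact mul_sum_sum_erase_le_of_cliqueFree (fun _ _ => h1 _ _)
      (cliqueFree_supportGraph (fun _ _ => hsymm _ _) hx)
  calc (r : ℝ) * ((Fintype.card ι * (Fintype.card ι - 1) : ℕ) * ∫ x, ∫ y, W x y ∂μ ∂μ)
      = ∫ x, r * ∑ i, ∑ j ∈ univ.erase i, W (x i) (x j) ∂(Measure.pi fun _ => μ) := by
        rw [integral_const_mul, integral_sum_sum_erase μ hW]
    _ ≤ ∫ _, (r - 1) * (Fintype.card ι : ℝ) ^ 2 ∂(Measure.pi fun _ : ι => μ) :=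
        integral_mono_ae ((integrable_sum_sum_erase μ hW).const_mul _) (integrable_const _) hpt
    _ = (r - 1) * Fintype.card ι ^ 2 := by simp
end

theorem le_of_forall_nat_mul_le_succ_mul {K : Type*} [Field K] [LinearOrder K]
    [IsStrictOrderedRing K] [Archimedean K] {a b : K}
    (h : ∀ n : ℕ, n * a ≤ (n + 1) * b) : a ≤ b := by
  by_contra! hab
  obtain ⟨n, hn⟩ := exists_nat_gt (b / (a - b))
  rw [div_lt_iff₀ (sub_pos.2 hab)] at hn
  linarith [h n]

theorem stmt17 {X : Type*} [MeasureSpace X]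
    [IsProbabilityMeasure (volume : Measure X)]
    (k : ℕ) (hk : 2 ≤ k) (W : X → X → ℝ)
    (hmeas : Measurable (Function.uncurry W))
    (hsymm : ∀ x y, W x y = W y x)
    (h0 : ∀ x y, 0 ≤ W x y) (h1 : ∀ x y, W x y ≤ 1)
    (hfree : ∫ x : Fin k → X,
      ∏ e ∈ Finset.univ.filter (fun e : Fin k × Fin k => e.1 < e.2),
        W (x e.1) (x e.2) = 0) :
    ∫ x, ∫ y, W x y ≤ 1 - 1 / ((k : ℝ) - 1) := by
  obtain ⟨r, rfl⟩ : ∃ r, k = r + 1 := ⟨k - 1, by omega⟩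
  have hWint : Integrable (uncurry W) (volume.prod volume) :=
    .of_bound hmeas.aestronglyMeasurable 1 <| .of_forall fun p => by
      change ‖W p.1 p.2‖ ≤ 1
      rw [Real.norm_of_nonneg (h0 p.1 p.2)]
      exact h1 p.1 p.2
  have hclique : ∀ᵐ y ∂(Measure.pi fun _ => volume), cliqueProd W (r + 1) y = 0 :=
    (integral_eq_zero_iff_of_nonneg (cliqueProd_nonneg h0 (r + 1))
      (integrable_cliqueProd volume hmeas h0 h1 (r + 1))).1 hfree
  have hturan : ∀ n : ℕ, n * (r * ∫ x, ∫ y, W x y) ≤ (n + 1) * (r - 1) := by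
    intro n
    have hn := mul_integral_integral_le_of_ae_cliqueProd_eq_zero (ι := Fin (n + 1)) volume
      hWint hsymm h1 hclique
    simp only [Fintype.card_fin, add_tsub_cancel_right, Nat.cast_mul, Nat.cast_add,
      Nat.cast_one] at hn
    refine le_of_mul_le_mul_left ?_ (by positivity : (0 : ℝ) < n + 1)
    linarith
  have hr0 : (0 : ℝ) < r := by exact_mod_cast (by omega : 0 < r)
  rw [show 1 - 1 / (((r + 1 : ℕ) : ℝ) - 1) = (r - 1) / r by
    push_cast; rw [add_sub_cancel_right]; field_simp, le_div_iff₀ hr0, mul_comm]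
  exact le_of_forall_nat_mul_le_succ_mul hturan
end

section
/- For d ≥ 5, the volume of the ball of radius 2/√3 in ℝ^d exceeds twice the volume of the unit ball: (2/√3)^d · ω_d > 2·ω_d. Moreover, any ball of radius 2/√3 in ℝ^d contains no three points with all pairwise distances greater than 2. -/
/-!
`(2 / √3) ^ 5 = 32 / (9 √3) > 2` since `9 √3 < 16`, and the power only grows with `d`.
Three points `x₀, x₁, x₂` around a centre taken as origin satisfy
`∑ ‖xᵢ - xⱼ‖² + ‖x₀ + x₁ + x₂‖² = 3 ∑ ‖xᵢ‖²`, so if all `‖xᵢ‖ ≤ r` some pair is at distance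
at most `√3 r`, which is `2` for `r = 2 / √3`.
-/

open MeasureTheory Metric

theorem two_lt_two_div_sqrt_three_pow {d : ℕ} (hd : 5 ≤ d) : 2 < (2 / √3) ^ d := by
  have hsqrt3 : √3 ^ 2 = 3 := Real.sq_sqrt (by norm_num)
  have hsqrt3_lt : √3 < 16 / 9 := (Real.sqrt_lt' (by norm_num)).2 (by norm_num)
  have hone_lt : 1 < 2 / √3 := by
    rw [one_lt_div (by positivity), Real.sqrt_lt' (by norm_num)]; norm_num
  calc (2 : ℝ) < 32 / (9 * √3) := by
        rw [lt_div_iff₀ (by positivity)]; linarith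
    _ = (2 / √3) ^ 5 := by
        rw [div_pow, show √3 ^ 5 = (√3 ^ 2) ^ 2 * √3 by ring, hsqrt3]; norm_num
    _ ≤ (2 / √3) ^ d := pow_le_pow_right₀ hone_lt.le hd

section InnerProductSpace

variable {E : Type*} [NormedAddCommGroup E] [InnerProductSpace ℝ E]

theorem norm_sub_sq_add_norm_sub_sq_add_norm_sub_sq_add_norm_add_add_sq (a b e : E) :
    ‖a - b‖ ^ 2 + ‖a - e‖ ^ 2 + ‖b - e‖ ^ 2 + ‖a + b + e‖ ^ 2 =
      3 * (‖a‖ ^ 2 + ‖b‖ ^ 2 + ‖e‖ ^ 2) := by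
  simp only [norm_sub_sq_real, norm_add_sq_real, inner_add_left]
  ring

theorem exists_dist_sq_le_of_mem_closedBall {c : E} {r : ℝ} {p : Fin 3 → E}
    (hp : ∀ i, p i ∈ closedBall c r) : ∃ i j, i ≠ j ∧ dist (p i) (p j) ^ 2 ≤ 3 * r ^ 2 := by
  by_contra! hfar
  have hnorm_sq (i : Fin 3) : ‖p i - c‖ ^ 2 ≤ r ^ 2 :=
    pow_le_pow_left₀ (norm_nonneg _) (mem_closedBall_iff_norm.1 (hp i)) 2
  have hdist (i j : Fin 3) : dist (p i) (p j) = ‖(p i - c) - (p j - c)‖ := by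
    rw [dist_eq_norm, sub_sub_sub_cancel_right]
  have h01 := hfar 0 1 (by decide)
  have h02 := hfar 0 2 (by decide)
  have h12 := hfar 1 2 (by decide)
  rw [hdist] at h01 h02 h12
  have := norm_sub_sq_add_norm_sub_sq_add_norm_sub_sq_add_norm_add_add_sq
    (p 0 - c) (p 1 - c) (p 2 - c)
  linarith [hnorm_sq 0, hnorm_sq 1, hnorm_sq 2, sq_nonneg ‖p 0 - c + (p 1 - c) + (p 2 - c)‖]

theorem exists_dist_le_of_mem_closedBall {c : E} {r : ℝ} {p : Fin 3 → E}
    (hp : ∀ i, p i ∈ closedBall c r) : ∃ i j, i ≠ j ∧ dist (p i) (p j) ≤ √3 * r := by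
  have hr : 0 ≤ r := dist_nonneg.trans (hp 0)
  obtain ⟨i, j, hij, hsq⟩ := exists_dist_sq_le_of_mem_closedBall hp
  refine ⟨i, j, hij, ?_⟩
  rw [← Real.sqrt_sq hr, ← Real.sqrt_mul (by norm_num), Real.le_sqrt dist_nonneg (by positivity)]
  exact hsq

end InnerProductSpace

theorem stmt18 (d : ℕ) (hd : 5 ≤ d) :
    2 * volume (Metric.ball (0 : EuclideanSpace ℝ (Fin d)) 1) <
      ENNReal.ofReal ((2 / Real.sqrt 3) ^ d) *
        volume (Metric.ball (0 : EuclideanSpace ℝ (Fin d)) 1) ∧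
    ∀ (c : EuclideanSpace ℝ (Fin d)) (p : Fin 3 → EuclideanSpace ℝ (Fin d)),
      (∀ i, p i ∈ Metric.closedBall c (2 / Real.sqrt 3)) →
      ∃ i j, i ≠ j ∧ dist (p i) (p j) ≤ 2 := by
  refine ⟨?_, fun c p hp => ?_⟩
  · refine ENNReal.mul_lt_mul_left (measure_ball_pos volume _ one_pos).ne'
      measure_ball_lt_top.ne ?_
    rw [← ENNReal.ofReal_ofNat, ENNReal.ofReal_lt_ofReal_iff_of_nonneg zero_le_two]
    exact two_lt_two_div_sqrt_three_pow hd
  · have hsqrt3 : √3 * (2 / √3) = 2 := mul_div_cancel₀ _ (by positivity)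
    simpa only [hsqrt3] using exists_dist_le_of_mem_closedBall hp
end
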